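/- arXiv:0909.5000 — 3 statements merged into one kernel-verified Lean document; each statement's English description precedes it below -/
import Mathlib

section
/- Let A be an M×M real matrix, 0 ≤ γ < 1, and suppose that for every j, the sum of |A_{i,j}| over i ≠ j is at most γ|A_{j,j}| (column diagonal dominance). Let λ = min_i |A_{i,i}| > 0. Then for every vector a ∈ ℝ^M, the ℓ¹ norm of Aa satisfies ‖Aa‖_1 ≥ (1−γ)λ‖a‖_1. -/
/-!
Split `(A a)_i` into its diagonal term and the rest: the reverse triangle inequality bounds
`|(A a)_i|` below by `|A_ii| |a_i|` minus the off-diagonal row sum. Summing over `i` and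
exchanging the order of summation turns the off-diagonal row sums into column sums, which column
diagonal dominance bounds by `γ |A_jj| |a_j|`.
-/

open Finset

namespace Matrix

variable {ι R : Type*} [Fintype ι] [DecidableEq ι]
  [CommRing R] [LinearOrder R] [IsStrictOrderedRing R]

theorem abs_diag_mul_sub_le_abs_mulVec (A : Matrix ι ι R) (a : ι → R) (i : ι) :
    |A i i| * |a i| - ∑ j ∈ univ.erase i, |A i j| * |a j| ≤ |(A *ᵥ a) i| := by
  have hsplit : (A *ᵥ a) i = A i i * a i + ∑ j ∈ univ.erase i, A i j * a j :=
    (add_sum_erase _ _ (mem_univ i)).symm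
  have hrest : |∑ j ∈ univ.erase i, A i j * a j| ≤ ∑ j ∈ univ.erase i, |A i j| * |a j| := by
    simpa only [abs_mul] using abs_sum_le_sum_abs (fun j => A i j * a j) (univ.erase i)
  have hrev := abs_sub_abs_le_abs_sub (A i i * a i) (-∑ j ∈ univ.erase i, A i j * a j)
  rw [abs_neg, sub_neg_eq_add, ← hsplit, abs_mul] at hrev
  linarith

theorem sum_offDiag_abs_mul_le_of_colDominant (A : Matrix ι ι R) (a : ι → R) {γ : R}
    (hcol : ∀ j, ∑ i ∈ univ.erase j, |A i j| ≤ γ * |A j j|) :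
    ∑ i, ∑ j ∈ univ.erase i, |A i j| * |a j| ≤ γ * ∑ j, |A j j| * |a j| := by
  have hswap : ∑ i, ∑ j ∈ univ.erase i, |A i j| * |a j|
      = ∑ j, ∑ i ∈ univ.erase j, |A i j| * |a j| :=
    sum_comm' fun i j => by simp only [mem_erase, mem_univ, ne_comm, and_comm]
  rw [hswap, mul_sum]
  gcongr with j
  calc ∑ i ∈ univ.erase j, |A i j| * |a j| = (∑ i ∈ univ.erase j, |A i j|) * |a j| :=
        (sum_mul _ _ _).symm
    _ ≤ γ * |A j j| * |a j| := mul_le_mul_of_nonneg_right (hcol j) (abs_nonneg _)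
    _ = γ * (|A j j| * |a j|) := mul_assoc _ _ _

theorem one_sub_mul_sum_abs_diag_mul_le_of_colDominant (A : Matrix ι ι R) (a : ι → R) {γ : R}
    (hcol : ∀ j, ∑ i ∈ univ.erase j, |A i j| ≤ γ * |A j j|) :
    (1 - γ) * ∑ j, |A j j| * |a j| ≤ ∑ i, |(A *ᵥ a) i| :=
  calc (1 - γ) * ∑ j, |A j j| * |a j|
      ≤ ∑ j, |A j j| * |a j| - ∑ i, ∑ j ∈ univ.erase i, |A i j| * |a j| := by
        linarith [sum_offDiag_abs_mul_le_of_colDominant A a hcol]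
    _ = ∑ i, (|A i i| * |a i| - ∑ j ∈ univ.erase i, |A i j| * |a j|) := sum_sub_distrib _ _ |>.symm
    _ ≤ ∑ i, |(A *ᵥ a) i| := sum_le_sum fun i _ => abs_diag_mul_sub_le_abs_mulVec A a i

end Matrix

theorem stmt_3_general {M : ℕ} (A : Matrix (Fin M) (Fin M) ℝ) (γ lam : ℝ)
    (hγ1 : γ < 1)
    (hdiag : ∀ i, lam ≤ |A i i|)
    (hcol : ∀ j, ∑ i ∈ Finset.univ.erase j, |A i j| ≤ γ * |A j j|) :
    ∀ a : Fin M → ℝ, (1 - γ) * lam * ∑ i, |a i| ≤ ∑ i, |A.mulVec a i| := by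
  intro a
  have h1γ : 0 ≤ 1 - γ := sub_nonneg.mpr hγ1.le
  calc (1 - γ) * lam * ∑ i, |a i| = (1 - γ) * ∑ i, lam * |a i| := by
        rw [mul_assoc, mul_sum]
    _ ≤ (1 - γ) * ∑ i, |A i i| * |a i| := by
        gcongr with i
        exact hdiag i
    _ ≤ ∑ i, |A.mulVec a i| := A.one_sub_mul_sum_abs_diag_mul_le_of_colDominant a hcol

theorem stmt_3 {M : ℕ} (hM : 0 < M) (A : Matrix (Fin M) (Fin M) ℝ) (γ lam : ℝ)
    (hγ0 : 0 ≤ γ) (hγ1 : γ < 1) (hlam : 0 < lam)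
    (hdiag : ∀ i, lam ≤ |A i i|)
    (hcol : ∀ j, ∑ i ∈ Finset.univ.erase j, |A i j| ≤ γ * |A j j|) :
    ∀ a : Fin M → ℝ, (1 - γ) * lam * ∑ i, |a i| ≤ ∑ i, |A.mulVec a i| :=
  stmt_3_general A γ lam hγ1 hdiag hcol
end

section
/- Let C > 0 and {a_j} be a sequence of nonnegative numbers, {ℓ_j} a nondecreasing sequence of nonnegative reals tending to infinity, and suppose there exist constants c₁, c₂ > 0 with c₁ L^C ≤ Σ_{ℓ_j ≤ L} a_j ≤ c₂ L^C for all L > 0. Then there exists a constant c₃ > 0 such that Σ_{j=0}^∞ exp(−ℓ_j² t) a_j ≥ c₃ t^{−C/2} for all t ∈ (0,1]. -/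
theorem stmt_4 (Cc : ℝ) (hC : 0 < Cc) (a ℓ : ℕ → ℝ)
    (ha : ∀ j, 0 ≤ a j) (hmono : Monotone ℓ) (hℓ0 : ∀ j, 0 ≤ ℓ j)
    (hlim : Filter.Tendsto ℓ Filter.atTop Filter.atTop)
    (hsum : ∀ t : ℝ, 0 < t → t ≤ 1 → Summable fun j => Real.exp (-(ℓ j) ^ 2 * t) * a j)
    (c₁ c₂ : ℝ) (hc₁ : 0 < c₁) (hc₂ : 0 < c₂)
    (hlow : ∀ L : ℝ, 0 < L → c₁ * L ^ Cc ≤ ∑' j, (if ℓ j ≤ L then a j else 0))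
    (hup : ∀ L : ℝ, 0 < L → (∑' j, (if ℓ j ≤ L then a j else 0)) ≤ c₂ * L ^ Cc) :
    ∃ c₃ : ℝ, 0 < c₃ ∧ ∀ t : ℝ, 0 < t → t ≤ 1 →
      c₃ * t ^ (-(Cc / 2)) ≤ ∑' j, Real.exp (-(ℓ j) ^ 2 * t) * a j := by
  refine ⟨c₁ * Real.exp (-1), by positivity, fun t ht ht1 => ?_⟩
  set L : ℝ := t ^ (-(1 : ℝ) / 2) with hL
  have hLpos : 0 < L := Real.rpow_pos_of_pos ht _
  have hLC : L ^ Cc = t ^ (-(Cc / 2)) := by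
    rw [hL, ← Real.rpow_mul ht.le]
    congr 1; ring
  have hL2 : L ^ (2 : ℕ) = t⁻¹ := by
    rw [hL, ← Real.rpow_natCast (t ^ (-(1 : ℝ) / 2)) 2, ← Real.rpow_mul ht.le]
    norm_num [Real.rpow_neg_one]
  have hle : ∀ j, (if ℓ j ≤ L then a j else 0)
      ≤ Real.exp 1 * (Real.exp (-(ℓ j) ^ 2 * t) * a j) := by
    intro j
    by_cases h : ℓ j ≤ L
    · simp only [h, if_pos]
      have h1 : (ℓ j) ^ 2 ≤ L ^ 2 := pow_le_pow_left₀ (hℓ0 j) h 2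
      have h2 : (ℓ j) ^ 2 * t ≤ 1 := by
        calc (ℓ j) ^ 2 * t ≤ L ^ 2 * t := by nlinarith
          _ = 1 := by rw [hL2]; field_simp
      have h3 : (1 : ℝ) ≤ Real.exp 1 * Real.exp (-(ℓ j) ^ 2 * t) := by
        rw [← Real.exp_add]
        have : (0 : ℝ) ≤ 1 + -(ℓ j) ^ 2 * t := by linarith
        calc (1 : ℝ) = Real.exp 0 := (Real.exp_zero).symm
          _ ≤ _ := Real.exp_le_exp.mpr this
      nlinarith [ha j, Real.exp_pos (-(ℓ j) ^ 2 * t), Real.exp_pos (1 : ℝ)]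
    · simp only [h, if_neg, not_false_iff]
      have := ha j
      positivity
  have hsum1 : Summable fun j => Real.exp 1 * (Real.exp (-(ℓ j) ^ 2 * t) * a j) :=
    (hsum t ht ht1).mul_left _
  have hsum0 : Summable fun j => (if ℓ j ≤ L then a j else 0) :=
    Summable.of_nonneg_of_le (fun j => by split <;> simp [ha]) hle hsum1
  have key : (∑' j, (if ℓ j ≤ L then a j else 0))
      ≤ Real.exp 1 * ∑' j, Real.exp (-(ℓ j) ^ 2 * t) * a j := by
    rw [← tsum_mul_left]
    exact Summable.tsum_le_tsum hle hsum0 hsum1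
  have hlowL := hlow L hLpos
  rw [hLC] at hlowL
  have hee : Real.exp (-1) * Real.exp 1 = 1 := by
    rw [← Real.exp_add]; norm_num
  calc c₁ * Real.exp (-1) * t ^ (-(Cc / 2))
      = Real.exp (-1) * (c₁ * t ^ (-(Cc / 2))) := by ring
    _ ≤ Real.exp (-1) * ∑' j, (if ℓ j ≤ L then a j else 0) :=
        mul_le_mul_of_nonneg_left hlowL (Real.exp_pos _).le
    _ ≤ Real.exp (-1) * (Real.exp 1 * ∑' j, Real.exp (-(ℓ j) ^ 2 * t) * a j) :=
        mul_le_mul_of_nonneg_left key (Real.exp_pos _).le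
    _ = ∑' j, Real.exp (-(ℓ j) ^ 2 * t) * a j := by rw [← mul_assoc, hee, one_mul]
end

section
/- Let (X, ρ, μ) be a metric measure space with μ(B(x,r)) ≤ c r^α for all x ∈ X, r > 0, for constants c, α > 0. Let d > 0 and ν be a d-regular signed measure, i.e. |ν|(B(x,r)) ≤ c'(μ(B(x,r)) + d^α) for all x, r. Let g₁ : [0,∞) → [0,∞) be nonincreasing. Then for any L > 0, r > 0, x ∈ X: L^α ∫_{ρ(x,y) > r} g₁(L ρ(x,y)) d|ν|(y) ≤ C (c + (d/r)^α) ∫_{rL/2}^∞ g₁(u) u^{α−1} du, where C depends only on α and c'. -/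
/-!
Split `{y | r < dist x y}` into the dyadic annuli `2ⁿr < dist x y ≤ 2ⁿ⁺¹r`. On the `n`-th annulus
the integrand is at most `g₁ (L 2ⁿ r)` by monotonicity, and its `ν`-mass is at most
`c' (c (2ⁿ⁺¹r)^α + d^α) ≤ c' 2^α (c + (d/r)^α) (2ⁿr)^α`, since `2ⁿr ≥ r`. Again by monotonicity,
`L^α g₁ (L 2ⁿ r) (2ⁿr)^α` is bounded by a constant times `∫ g₁ u u^(α-1)` over `(L 2ⁿ⁻¹ r, L 2ⁿ r]`,
and these intervals tile `(rL/2, ∞)`.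
-/

open MeasureTheory Set
open scoped ENNReal

/-- No measurability of `s` is needed: a measurable minorant of `f` with the same integral is
bounded by `K` on `s`, and `{g ≤ K}` is a measurable set containing `s`. -/
theorem setLIntegral_le_mul_measure_of_forall_le {X : Type*} [MeasurableSpace X] (ν : Measure X)
    {s : Set X} {f : X → ℝ≥0∞} {K : ℝ≥0∞} (hf : ∀ y ∈ s, f y ≤ K) :
    ∫⁻ y in s, f y ∂ν ≤ K * ν s := by
  obtain ⟨g, hg, hgf, hfg⟩ := exists_measurable_le_lintegral_eq (ν.restrict s) f
  have hgK : ∀ᵐ y ∂ν.restrict s, g y ≤ K := by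
    rw [ae_iff, show {y | ¬g y ≤ K} = {y | g y ≤ K}ᶜ from rfl,
      Measure.restrict_apply (measurableSet_le hg measurable_const).compl]
    exact measure_mono_null (fun y ⟨hy, hys⟩ => hy ((hgf y).trans (hf y hys))) measure_empty
  calc ∫⁻ y in s, f y ∂ν = ∫⁻ y in s, g y ∂ν := hfg
    _ ≤ ∫⁻ _ in s, K ∂ν := lintegral_mono_ae hgK
    _ = K * ν s := setLIntegral_const s K

theorem exists_nat_mem_Ioc_pow_mul {b r t : ℝ} (hb : 1 < b) (hr : 0 < r) (hrt : r < t) :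
    ∃ n : ℕ, t ∈ Ioc (b ^ n * r) (b ^ (n + 1) * r) := by
  obtain ⟨n, hn₁, hn₂⟩ := exists_mem_Ioc_zpow (div_pos (hr.trans hrt) hr) hb
  have hn : 0 ≤ n := by
    have : b ^ (0 : ℤ) < b ^ (n + 1) := by
      rw [zpow_zero]; exact ((one_lt_div hr).2 hrt).trans_le hn₂
    have := (zpow_lt_zpow_iff_right₀ hb).1 this
    omega
  lift n to ℕ using hn
  refine ⟨n, ?_, ?_⟩
  · rwa [zpow_natCast, lt_div_iff₀ hr] at hn₁
  · rwa [← Nat.cast_succ, zpow_natCast, div_le_iff₀ hr] at hn₂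

theorem setLIntegral_dist_gt_le_tsum {X : Type*} [PseudoMetricSpace X] [MeasurableSpace X]
    (ν : Measure X) (x : X) {r : ℝ} (hr : 0 < r) {f : ℝ → ℝ≥0∞} (hf : AntitoneOn f (Ioi 0)) :
    ∫⁻ y in {y | r < dist x y}, f (dist x y) ∂ν ≤
      ∑' n : ℕ, f (2 ^ n * r) * ν (Metric.closedBall x (2 * (2 ^ n * r))) := by
  set A : ℕ → Set X := fun n => {y | dist x y ∈ Ioc (2 ^ n * r) (2 * (2 ^ n * r))}
  have hcover : {y | r < dist x y} ⊆ ⋃ n, A n := fun y hy => by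
    obtain ⟨n, hn⟩ := exists_nat_mem_Ioc_pow_mul one_lt_two hr hy
    rw [pow_succ', mul_assoc] at hn
    exact mem_iUnion.2 ⟨n, hn⟩
  calc ∫⁻ y in {y | r < dist x y}, f (dist x y) ∂ν
      ≤ ∫⁻ y in ⋃ n, A n, f (dist x y) ∂ν := lintegral_mono_set hcover
    _ ≤ ∑' n, ∫⁻ y in A n, f (dist x y) ∂ν := lintegral_iUnion_le _ _
    _ ≤ ∑' n : ℕ, f (2 ^ n * r) * ν (Metric.closedBall x (2 * (2 ^ n * r))) := by
      refine ENNReal.tsum_le_tsum fun n => ?_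
      have hpos : 0 < 2 ^ n * r := by positivity
      refine (setLIntegral_le_mul_measure_of_forall_le ν fun y hy =>
        hf hpos (hpos.trans hy.1) hy.1.le).trans (mul_le_mul_right (measure_mono ?_) _)
      exact fun y hy => by rw [Metric.mem_closedBall, dist_comm]; exact hy.2

theorem tsum_setLIntegral_Ioc_le_setLIntegral_Ioi {s : ℕ → ℝ} (hs : Monotone s) (f : ℝ → ℝ≥0∞) :
    ∑' n, ∫⁻ u in Ioc (s n) (s (n + 1)), f u ≤ ∫⁻ u in Ioi (s 0), f u := by
  rw [← lintegral_iUnion (fun n => measurableSet_Ioc)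
    (by simpa using hs.pairwise_disjoint_on_Ioc_succ)]
  exact lintegral_mono_set (iUnion_subset fun n u hu => (hs (Nat.zero_le n)).trans_lt hu.1)

theorem min_one_two_rpow_mul_rpow_le {a u : ℝ} (α : ℝ) (ha : 0 < a) (hu : u ∈ Ioc (a / 2) a) :
    min 1 (2 ^ (α - 1)) * (a / 2) ^ (α - 1) ≤ u ^ (α - 1) := by
  have ha₂ : 0 < a / 2 := half_pos ha
  rcases le_total 0 (α - 1) with hα | hα
  · exact (mul_le_of_le_one_left (by positivity) (min_le_left _ _)).trans
      (Real.rpow_le_rpow ha₂.le hu.1.le hα)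
  · calc min 1 (2 ^ (α - 1)) * (a / 2) ^ (α - 1) ≤ 2 ^ (α - 1) * (a / 2) ^ (α - 1) := by
          gcongr; exact min_le_right _ _
      _ = a ^ (α - 1) := by rw [← Real.mul_rpow zero_le_two ha₂.le, mul_div_cancel₀ _ two_ne_zero]
      _ ≤ u ^ (α - 1) := Real.rpow_le_rpow_of_nonpos (ha₂.trans hu.1) hu.2 hα

theorem ofReal_mul_rpow_le_setLIntegral_Ioc {g : ℝ → ℝ} (hg : AntitoneOn g (Ioi 0))
    (hg₀ : ∀ u, 0 ≤ g u) (α : ℝ) {a : ℝ} (ha : 0 < a) :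
    ENNReal.ofReal (g a * (min 1 (2 ^ (α - 1)) * (a / 2) ^ α)) ≤
      ∫⁻ u in Ioc (a / 2) a, ENNReal.ofReal (g u * u ^ (α - 1)) := by
  set m : ℝ := min 1 (2 ^ (α - 1))
  have hm : 0 ≤ m := le_min zero_le_one (by positivity)
  have hvol : volume (Ioc (a / 2) a) = ENNReal.ofReal (a / 2) := by rw [Real.volume_Ioc]; ring_nf
  calc ENNReal.ofReal (g a * (m * (a / 2) ^ α))
      = ∫⁻ _ in Ioc (a / 2) a, ENNReal.ofReal (g a * (m * (a / 2) ^ (α - 1))) := by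
        rw [setLIntegral_const, hvol,
          ← ENNReal.ofReal_mul (mul_nonneg (hg₀ _) (mul_nonneg hm (by positivity)))]
        congr 1
        rw [Real.rpow_sub_one (by positivity)]
        field_simp
    _ ≤ ∫⁻ u in Ioc (a / 2) a, ENNReal.ofReal (g u * u ^ (α - 1)) := by
        refine setLIntegral_mono' measurableSet_Ioc fun u hu => ENNReal.ofReal_le_ofReal ?_
        exact mul_le_mul (hg ((half_pos ha).trans hu.1) ha hu.2)
          (min_one_two_rpow_mul_rpow_le α ha hu) (mul_nonneg hm (by positivity)) (hg₀ u)

/-- The contribution of the annulus `a < dist x y ≤ 2a` is paid for by the integral over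
`(La/2, La]`, where `g u ≥ g (La)` and whose length times `u ^ (α - 1)` is of order `(La)^α`. -/
theorem ofReal_rpow_mul_le_mul_setLIntegral_Ioc {g : ℝ → ℝ} (hg : AntitoneOn g (Ioi 0))
    (hg₀ : ∀ u, 0 ≤ g u) {α cprime K L a : ℝ} (hcprime : 0 ≤ cprime) (hK : 0 ≤ K) (hL : 0 < L)
    (ha : 0 < a) :
    ENNReal.ofReal (L ^ α) *
        (ENNReal.ofReal (g (L * a)) * ENNReal.ofReal (cprime * (2 ^ α * K * a ^ α))) ≤
      ENNReal.ofReal (cprime * (2 ^ α * 2 ^ α) / min 1 (2 ^ (α - 1)) * K) *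
        ∫⁻ u in Ioc (L * a / 2) (L * a), ENNReal.ofReal (g u * u ^ (α - 1)) := by
  have hm : 0 < min 1 ((2 : ℝ) ^ (α - 1)) := lt_min one_pos (by positivity)
  refine le_of_eq_of_le ?_ (mul_le_mul_right
    (ofReal_mul_rpow_le_setLIntegral_Ioc hg hg₀ α (mul_pos hL ha)) _)
  rw [← ENNReal.ofReal_mul (hg₀ _), ← ENNReal.ofReal_mul (by positivity),
    ← ENNReal.ofReal_mul (by positivity), Real.div_rpow (by positivity) zero_le_two,
    Real.mul_rpow hL.le ha.le]
  congr 1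
  field_simp

theorem mul_two_mul_rpow_add_rpow_le {α c d r a : ℝ} (hα : 0 ≤ α) (hd : 0 ≤ d) (hr : 0 < r)
    (hra : r ≤ a) :
    c * (2 * a) ^ α + d ^ α ≤ 2 ^ α * (c + (d / r) ^ α) * a ^ α := by
  have hdr : 0 ≤ d / r := div_nonneg hd hr.le
  have hd' : d ^ α ≤ 2 ^ α * ((d / r) ^ α * a ^ α) := by
    calc d ^ α = (d / r) ^ α * r ^ α := by
          rw [← Real.mul_rpow hdr hr.le, div_mul_cancel₀ _ hr.ne']
      _ ≤ 1 * ((d / r) ^ α * a ^ α) := by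
          rw [one_mul]; gcongr
      _ ≤ 2 ^ α * ((d / r) ^ α * a ^ α) :=
          mul_le_mul_of_nonneg_right (Real.one_le_rpow one_le_two hα)
            (mul_nonneg (Real.rpow_nonneg hdr _) (Real.rpow_nonneg (hr.le.trans hra) _))
  rw [Real.mul_rpow zero_le_two (hr.le.trans hra)]
  nlinarith

theorem measure_closedBall_two_mul_le {X : Type*} [PseudoMetricSpace X] [MeasurableSpace X]
    {μ ν : Measure X} {α cprime c d r a : ℝ} (hα : 0 ≤ α) (hcprime : 0 ≤ cprime) (hc : 0 ≤ c)
    (hd : 0 ≤ d) (hr : 0 < r) (hra : r ≤ a)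
    (hμ : ∀ (z : X) (s : ℝ), 0 < s → μ (Metric.closedBall z s) ≤ ENNReal.ofReal (c * s ^ α))
    (hν : ∀ (z : X) (s : ℝ), 0 < s → ν (Metric.closedBall z s) ≤
      ENNReal.ofReal (cprime * ((μ (Metric.closedBall z s)).toReal + d ^ α))) (x : X) :
    ν (Metric.closedBall x (2 * a)) ≤
      ENNReal.ofReal (cprime * (2 ^ α * (c + (d / r) ^ α) * a ^ α)) := by
  have ha : 0 < 2 * a := by linarith
  refine (hν x _ ha).trans (ENNReal.ofReal_le_ofReal ?_)
  gcongr
  calc (μ (Metric.closedBall x (2 * a))).toReal + d ^ α ≤ c * (2 * a) ^ α + d ^ α := by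
        gcongr
        exact ENNReal.toReal_le_of_le_ofReal (by positivity) (hμ x _ ha)
    _ ≤ 2 ^ α * (c + (d / r) ^ α) * a ^ α := mul_two_mul_rpow_add_rpow_le hα hd hr hra

theorem stmt_8 (α cprime : ℝ) (hα : 0 < α) (hcprime : 0 < cprime) :
    ∃ C : ℝ, 0 < C ∧
      ∀ (X : Type) [MetricSpace X] [MeasurableSpace X],
        ∀ (μ ν : Measure X) (c d L r : ℝ) (x : X) (g₁ : ℝ → ℝ),
        0 < c → 0 < d → 0 < L → 0 < r →
        (∀ (z : X) (s : ℝ), 0 < s → μ (Metric.closedBall z s) ≤ ENNReal.ofReal (c * s ^ α)) →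
        (∀ (z : X) (s : ℝ), 0 < s →
          ν (Metric.closedBall z s) ≤
            ENNReal.ofReal (cprime * ((μ (Metric.closedBall z s)).toReal + d ^ α))) →
        (∀ u v : ℝ, 0 ≤ u → u ≤ v → g₁ v ≤ g₁ u) → (∀ u, 0 ≤ g₁ u) →
        ENNReal.ofReal (L ^ α) *
            ∫⁻ y in {y : X | r < dist x y}, ENNReal.ofReal (g₁ (L * dist x y)) ∂ν ≤
          ENNReal.ofReal (C * (c + (d / r) ^ α)) *
            ∫⁻ u in Set.Ioi (r * L / 2), ENNReal.ofReal (g₁ u * u ^ (α - 1)) := by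
  have hm : 0 < min 1 ((2 : ℝ) ^ (α - 1)) := lt_min one_pos (by positivity)
  set C := cprime * (2 ^ α * 2 ^ α) / min 1 (2 ^ (α - 1))
  refine ⟨C, by positivity, ?_⟩
  intro X _ _ μ ν c d L r x g₁ hc hd hL hr hμ hν hg hg₀
  have hg' : AntitoneOn g₁ (Ioi 0) := fun u hu v _ huv => hg u v (le_of_lt hu) huv
  have hK : 0 ≤ c + (d / r) ^ α := by positivity
  have hIoc (n : ℕ) : Ioc (L * (2 ^ n * r) / 2) (L * (2 ^ n * r)) =
      Ioc (2 ^ n * (r * L / 2)) (2 ^ (n + 1) * (r * L / 2)) := by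
    congr 1 <;> ring
  calc ENNReal.ofReal (L ^ α) *
        ∫⁻ y in {y : X | r < dist x y}, ENNReal.ofReal (g₁ (L * dist x y)) ∂ν
      ≤ ∑' n : ℕ, ENNReal.ofReal (L ^ α) * (ENNReal.ofReal (g₁ (L * (2 ^ n * r))) *
          ν (Metric.closedBall x (2 * (2 ^ n * r)))) := by
        rw [ENNReal.tsum_mul_left]
        gcongr
        exact setLIntegral_dist_gt_le_tsum ν x hr (f := fun t => ENNReal.ofReal (g₁ (L * t)))
          fun s hs t _ hst => ENNReal.ofReal_le_ofReal
            (hg' (mul_pos hL hs) (mul_pos hL (hs.trans_le hst)) (by gcongr))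
    _ ≤ ∑' n : ℕ, ENNReal.ofReal (C * (c + (d / r) ^ α)) *
          ∫⁻ u in Ioc (L * (2 ^ n * r) / 2) (L * (2 ^ n * r)),
            ENNReal.ofReal (g₁ u * u ^ (α - 1)) := by
        refine ENNReal.tsum_le_tsum fun n => ?_
        have hra : r ≤ 2 ^ n * r := le_mul_of_one_le_left hr.le (one_le_pow₀ one_le_two)
        grw [measure_closedBall_two_mul_le hα.le hcprime.le hc.le hd.le hr hra hμ hν x]
        exact ofReal_rpow_mul_le_mul_setLIntegral_Ioc hg' hg₀ hcprime.le hK hL (hr.trans_le hra)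
    _ ≤ _ := by
        rw [ENNReal.tsum_mul_left]
        gcongr
        simp only [hIoc]
        simpa using tsum_setLIntegral_Ioc_le_setLIntegral_Ioi
          ((pow_right_mono₀ one_le_two).mul_const (by positivity)) _
end
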